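/- arXiv:2211.00781 — 3 statements merged into one kernel-verified Lean document; each statement's English description precedes it below -/
import Mathlib

section
/- Let L be a finite distributive lattice and S = {f_i}_{i ∈ I} a finite family of join-endomorphisms of L. Define δ(c) = ⨅ { ⨆_{i∈I} f_i(a_i) | (a_i)_{i∈I} a tuple of elements of L with ⨆_{i∈I} a_i ≥ c }. Then δ is the greatest join-endomorphism h of L such that h ≤ f_i pointwise for all i ∈ I. -/
/-!
The values `⨆ i, f i (a i)` over tuples `a` with `c ≤ ⨆ i, a i` are upper bounds of `h c` for
every join-endomorphism `h ≤ f i`, so their meet `δ c` dominates all such `h`; the tuple that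
is `c` at `i` and `⊥` elsewhere gives `δ ≤ f i`. Joining tuples coordinatewise shows that every
`x ⊔ y` with `x` a candidate for `a` and `y` a candidate for `b` is a candidate for `a ⊔ b`;
since `L` is finite and distributive, `δ a ⊔ δ b` is the meet of these joins, whence
`δ (a ⊔ b) ≤ δ a ⊔ δ b`.
-/

def IsJoinEndo {L : Type*} [Lattice L] [OrderBot L] (f : L → L) : Prop :=
  f ⊥ = ⊥ ∧ ∀ a b, f (a ⊔ b) = f a ⊔ f b

theorem IsGLB.le_sup_of_finite {L : Type*} [DistribLattice L] {t : Set L} {b x d : L}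
    (hb : IsGLB t b) (ht : t.Finite) (hd : ∀ y ∈ t, d ≤ x ⊔ y) : d ≤ x ⊔ b := by
  rcases t.eq_empty_or_nonempty with rfl | hne
  · exact le_sup_of_le_right (isGLB_empty_iff.1 hb d)
  · lift t to Finset L using ht
    rw [hb.unique (t.isGLB_inf' hne)]
    exact Finset.inf'_induction hne id
      (fun y₁ h₁ y₂ h₂ => sup_inf_left x y₁ y₂ ▸ le_inf h₁ h₂) hd

namespace IsJoinEndo

variable {L : Type*} [Lattice L] [OrderBot L] {f : L → L}

theorem monotone (hf : IsJoinEndo f) : Monotone f := fun x y hxy =>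
  le_sup_left.trans_eq (by rw [← hf.2, sup_eq_right.2 hxy])

theorem map_finset_sup (hf : IsJoinEndo f) {ι : Type*} (s : Finset ι) (a : ι → L) :
    f (s.sup a) = s.sup (f ∘ a) :=
  Finset.apply_sup_eq_sup_comp f hf.2 hf.1

end IsJoinEndo

section CoverImages

variable {L : Type*} [Lattice L] [OrderBot L] {I : Type*} [Fintype I] {f : I → L → L}

/-- The set whose meet is `δ c`. -/
def coverImages (f : I → L → L) (c : L) : Set L :=
  {x | ∃ a : I → L, c ≤ Finset.univ.sup a ∧ x = Finset.univ.sup fun i => f i (a i)}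

theorem coverImages_anti {c d : L} (hcd : c ≤ d) : coverImages f d ⊆ coverImages f c :=
  fun _ ⟨a, ha, hx⟩ => ⟨a, hcd.trans ha, hx⟩

theorem bot_mem_coverImages_bot (hf : ∀ i, f i ⊥ = ⊥) : ⊥ ∈ coverImages f ⊥ :=
  ⟨fun _ => ⊥, bot_le, by simp [hf]⟩

theorem apply_mem_coverImages [DecidableEq I] (hf : ∀ i, f i ⊥ = ⊥) (i : I) (c : L) :
    f i c ∈ coverImages f c := by
  have hsingle : ∀ g : I → L → L, (∀ j, g j ⊥ = ⊥) →
      (Finset.univ.sup fun j => g j (Function.update (fun _ => (⊥ : L)) i c j)) = g i c := by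
    intro g hg
    rw [← Finset.insert_erase (Finset.mem_univ i), Finset.sup_insert, Function.update_self,
      sup_eq_left]
    refine Finset.sup_le fun j hj => ?_
    rw [Function.update_of_ne (Finset.ne_of_mem_erase hj), hg]
    exact bot_le
  exact ⟨_, (hsingle (fun _ => id) fun _ => rfl).ge, (hsingle f hf).symm⟩

theorem sup_mem_coverImages (hf : ∀ i, IsJoinEndo (f i)) {a b x y : L}
    (hx : x ∈ coverImages f a) (hy : y ∈ coverImages f b) : x ⊔ y ∈ coverImages f (a ⊔ b) := by
  obtain ⟨u, hu, rfl⟩ := hx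
  obtain ⟨v, hv, rfl⟩ := hy
  refine ⟨u ⊔ v, ?_, ?_⟩
  · rw [Finset.sup_sup]
    exact sup_le_sup hu hv
  · simp only [Pi.sup_apply, (hf _).2, ← Finset.sup_sup]
    rfl

theorem le_of_mem_coverImages {h : L → L} (hh : IsJoinEndo h) (hhf : ∀ i, h ≤ f i) {c x : L}
    (hx : x ∈ coverImages f c) : h c ≤ x := by
  obtain ⟨a, ha, rfl⟩ := hx
  calc h c ≤ h (Finset.univ.sup a) := hh.monotone ha
    _ = Finset.univ.sup (h ∘ a) := hh.map_finset_sup _ _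
    _ ≤ Finset.univ.sup fun i => f i (a i) := Finset.sup_mono_fun fun i _ => hhf i (a i)

end CoverImages

theorem delta_star_is_meet {L : Type*} [DistribLattice L] [OrderBot L] [Fintype L]
    {I : Type*} [Fintype I] (f : I → L → L) (hf : ∀ i, IsJoinEndo (f i))
    (δ : L → L)
    (hδ : ∀ c : L, IsGLB {x : L | ∃ a : I → L,
        c ≤ Finset.univ.sup a ∧ x = Finset.univ.sup (fun i => f i (a i))} (δ c)) :
    IsJoinEndo δ ∧ (∀ i, δ ≤ f i) ∧
      ∀ h : L → L, IsJoinEndo h → (∀ i, h ≤ f i) → h ≤ δ := by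
  classical
  replace hδ : ∀ c, IsGLB (coverImages f c) (δ c) := hδ
  have hbot : ∀ i, f i ⊥ = ⊥ := fun i => (hf i).1
  have hmono : Monotone δ := fun c d hcd => (hδ d).mono (hδ c) (coverImages_anti hcd)
  have hjoin : ∀ a b, δ (a ⊔ b) ≤ δ a ⊔ δ b := fun a b => by
    rw [sup_comm (δ a)]
    refine (hδ a).le_sup_of_finite (Set.toFinite _) fun x hx => ?_
    rw [sup_comm (δ b)]
    exact (hδ b).le_sup_of_finite (Set.toFinite _) fun y hy =>
      (hδ (a ⊔ b)).1 (sup_mem_coverImages hf hx hy)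
  refine ⟨⟨le_bot_iff.1 ((hδ ⊥).1 (bot_mem_coverImages_bot hbot)), fun a b => ?_⟩,
    fun i c => (hδ c).1 (apply_mem_coverImages hbot i c),
    fun h hh hhf c => (hδ c).2 fun _ => le_of_mem_coverImages hh hhf⟩
  exact (hjoin a b).antisymm (sup_le (hmono le_sup_left) (hmono le_sup_right))
end

section
/- Let L be a finite distributive lattice and f, g join-endomorphisms of L. Let h be the greatest join-endomorphism below both f and g (i.e., their meet in the lattice of join-endomorphisms ordered pointwise). Then for all c ∈ L, h(c) = ⨅ { f(a) ⊔ g(c \ a) | a ≤ c }, where c \ a denotes the subtraction operation (co-Heyting difference) of L. -/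
/-!
Write `c \ a` for the subtraction. The pointwise meet `h₀ c = ⨅_{a ≤ c} f a ⊔ g (c \ a)` is
itself a join-endomorphism below `f` (take `a = c`) and `g` (take `a = ⊥`): it is monotone,
and additive because `(c ⊔ d) \ (a ⊔ b) ≤ c \ a ⊔ d \ b` and `⊔` distributes over finite
meets. Conversely every join-endomorphism `h ≤ f, g` satisfies
`h c ≤ h (a ⊔ c \ a) = h a ⊔ h (c \ a) ≤ f a ⊔ g (c \ a)`, so `h ≤ h₀`. Hence the greatest
one is `h₀`.
-/

open Finset

theorem IsJoinEndo.monotone_s4 {L : Type*} [Lattice L] [OrderBot L] {f : L → L}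
    (hf : IsJoinEndo f) : Monotone f := fun a b hab => by
  simpa [sup_eq_right.2 hab] using (hf.2 a b).ge

abbrev GeneralizedCoheytingAlgebra.ofSub {L : Type*} [Lattice L] [OrderBot L] (sub : L → L → L)
    (hsub : ∀ a b c : L, sub c a ≤ b ↔ c ≤ a ⊔ b) : GeneralizedCoheytingAlgebra L where
  sdiff := sub
  sdiff_le_iff c a b := hsub a b c

theorem sup_sdiff_sup_le_sup_sdiff {L : Type*} [GeneralizedCoheytingAlgebra L] (a b c d : L) :
    (c ⊔ d) \ (a ⊔ b) ≤ c \ a ⊔ d \ b := by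
  rw [sdiff_le_iff]
  exact sup_le (le_sup_sdiff.trans (sup_le_sup le_sup_left le_sup_left))
    (le_sup_sdiff.trans (sup_le_sup le_sup_right le_sup_right))

section sdiffMeet

variable {L : Type*} [GeneralizedCoheytingAlgebra L] [LocallyFiniteOrderBot L] {f g : L → L}

variable (f g) in
def sdiffMeet (c : L) : L :=
  (Iic c).inf' nonempty_Iic fun a => f a ⊔ g (c \ a)

theorem sdiffMeet_le {a c : L} (hac : a ≤ c) : sdiffMeet f g c ≤ f a ⊔ g (c \ a) :=
  inf'_le _ (mem_Iic.2 hac)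

theorem le_sdiffMeet_iff {x c : L} :
    x ≤ sdiffMeet f g c ↔ ∀ a ≤ c, x ≤ f a ⊔ g (c \ a) := by
  simp [sdiffMeet, le_inf'_iff]

variable (f g) in
theorem isGLB_sdiffMeet (c : L) :
    IsGLB {x : L | ∃ a : L, a ≤ c ∧ x = f a ⊔ g (c \ a)} (sdiffMeet f g c) :=
  ⟨by rintro _ ⟨a, hac, rfl⟩; exact sdiffMeet_le hac,
    fun x hx => le_sdiffMeet_iff.2 fun a hac => hx ⟨a, hac, rfl⟩⟩

theorem monotone_sdiffMeet (hf : Monotone f) (hg : Monotone g) : Monotone (sdiffMeet f g) := by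
  intro c d hcd
  refine le_sdiffMeet_iff.2 fun a had => (sdiffMeet_le (inf_le_right : a ⊓ c ≤ c)).trans ?_
  rw [sdiff_inf_self_right]
  exact sup_le_sup (hf inf_le_left) (hg (sdiff_le_sdiff_right hcd))

theorem sdiffMeet_bot (hf : f ⊥ = ⊥) (hg : g ⊥ = ⊥) : sdiffMeet f g (⊥ : L) = ⊥ :=
  le_bot_iff.1 <| (sdiffMeet_le le_rfl).trans_eq <| by rw [bot_sdiff, hf, hg, sup_bot_eq]

theorem sdiffMeet_sup_le (hf : ∀ a b, f (a ⊔ b) = f a ⊔ f b) (hg : IsJoinEndo g) (c d : L) :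
    sdiffMeet f g (c ⊔ d) ≤ sdiffMeet f g c ⊔ sdiffMeet f g d := by
  rw [show sdiffMeet f g c ⊔ sdiffMeet f g d = _ from inf'_sup_inf' _ _ _ _, le_inf'_iff]
  rintro ⟨a, b⟩ hab
  obtain ⟨hac, hbd⟩ := mem_product.1 hab
  calc sdiffMeet f g (c ⊔ d)
      ≤ f (a ⊔ b) ⊔ g ((c ⊔ d) \ (a ⊔ b)) :=
        sdiffMeet_le (sup_le_sup (mem_Iic.1 hac) (mem_Iic.1 hbd))
    _ ≤ f a ⊔ f b ⊔ (g (c \ a) ⊔ g (d \ b)) := by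
        rw [hf, ← hg.2]
        exact sup_le_sup_left (hg.monotone_s4 (sup_sdiff_sup_le_sup_sdiff a b c d)) _
    _ = f a ⊔ g (c \ a) ⊔ (f b ⊔ g (d \ b)) := sup_sup_sup_comm _ _ _ _

theorem isJoinEndo_sdiffMeet (hf : IsJoinEndo f) (hg : IsJoinEndo g) :
    IsJoinEndo (sdiffMeet f g) :=
  ⟨sdiffMeet_bot hf.1 hg.1, fun c d => (sdiffMeet_sup_le hf.2 hg c d).antisymm <|
    sup_le (monotone_sdiffMeet hf.monotone_s4 hg.monotone_s4 le_sup_left)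
      (monotone_sdiffMeet hf.monotone_s4 hg.monotone_s4 le_sup_right)⟩

theorem sdiffMeet_le_left (hg : g ⊥ = ⊥) : sdiffMeet f g ≤ f := fun c =>
  (sdiffMeet_le le_rfl).trans_eq <| by rw [sdiff_self, hg, sup_bot_eq]

theorem sdiffMeet_le_right (hf : f ⊥ = ⊥) : sdiffMeet f g ≤ g := fun c =>
  (sdiffMeet_le bot_le).trans <| by rw [hf, bot_sup_eq, sdiff_bot]

theorem IsJoinEndo.le_sdiffMeet {h : L → L} (hh : IsJoinEndo h) (hhf : h ≤ f) (hhg : h ≤ g) :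
    h ≤ sdiffMeet f g := fun c => le_sdiffMeet_iff.2 fun a _ =>
  calc h c ≤ h (a ⊔ c \ a) := hh.monotone_s4 le_sup_sdiff
    _ = h a ⊔ h (c \ a) := hh.2 _ _
    _ ≤ f a ⊔ g (c \ a) := sup_le_sup (hhf a) (hhg _)

end sdiffMeet

theorem meet_via_subtraction {L : Type*} [DistribLattice L] [OrderBot L] [Fintype L]
    (sub : L → L → L) (hsub : ∀ a b c : L, sub c a ≤ b ↔ c ≤ a ⊔ b)
    (f g : L → L) (hf : IsJoinEndo f) (hg : IsJoinEndo g)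
    (h : L → L)
    (hh : IsJoinEndo h ∧ h ≤ f ∧ h ≤ g ∧
      ∀ h' : L → L, IsJoinEndo h' → h' ≤ f → h' ≤ g → h' ≤ h) :
    ∀ c : L, IsGLB {x : L | ∃ a : L, a ≤ c ∧ x = f a ⊔ g (sub c a)} (h c) := by
  classical
  let _ := GeneralizedCoheytingAlgebra.ofSub sub hsub
  let _ : LocallyFiniteOrder L := Fintype.toLocallyFiniteOrder
  obtain ⟨hh, hhf, hhg, hmax⟩ := hh
  obtain rfl : h = sdiffMeet f g := (hh.le_sdiffMeet hhf hhg).antisymm <|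
    hmax _ (isJoinEndo_sdiffMeet hf hg) (sdiffMeet_le_left hg.1)
      (sdiffMeet_le_right hf.1)
  exact isGLB_sdiffMeet f g
end

section
/- Let L be a finite lattice, S a finite set of join-endomorphisms of L, and h the greatest join-endomorphism below every element of S (pointwise). Let σ : L → L satisfy σ ≥ h pointwise. If u, v ∈ L satisfy σ(u) ⊔ σ(v) < σ(u ⊔ v), then the function σ' obtained from σ by redefining σ'(u ⊔ v) = σ(u) ⊔ σ(v) still satisfies σ' ≥ h pointwise, and σ' < σ in the pointwise order. -/
theorem IsJoinEndo.apply_sup_le_sup {L : Type*} [Lattice L] [OrderBot L] {h σ : L → L}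
    (hh : IsJoinEndo h) (hσ : h ≤ σ) (u v : L) : h (u ⊔ v) ≤ σ u ⊔ σ v :=
  (hh.2 u v).trans_le (sup_le_sup (hσ u) (hσ v))

theorem gmeet_update_case1_general {L : Type*} [Lattice L] [OrderBot L] [DecidableEq L]
    (S : Set (L → L))
    (h : L → L)
    (hh : IsJoinEndo h ∧ (∀ f ∈ S, h ≤ f) ∧
      ∀ h' : L → L, IsJoinEndo h' → (∀ f ∈ S, h' ≤ f) → h' ≤ h)
    (σ : L → L) (hσ : h ≤ σ)
    (u v : L) (huv : σ u ⊔ σ v < σ (u ⊔ v)) :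
    h ≤ Function.update σ (u ⊔ v) (σ u ⊔ σ v) ∧
      Function.update σ (u ⊔ v) (σ u ⊔ σ v) < σ :=
  ⟨le_update_iff.2 ⟨hh.1.apply_sup_le_sup hσ u v, fun x _ => hσ x⟩, update_lt_self_iff.2 huv⟩

theorem gmeet_update_case1 {L : Type*} [Lattice L] [OrderBot L] [Fintype L] [DecidableEq L]
    (S : Set (L → L)) (hSfin : S.Finite) (hS : ∀ f ∈ S, IsJoinEndo f)
    (h : L → L)
    (hh : IsJoinEndo h ∧ (∀ f ∈ S, h ≤ f) ∧
      ∀ h' : L → L, IsJoinEndo h' → (∀ f ∈ S, h' ≤ f) → h' ≤ h)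
    (σ : L → L) (hσ : h ≤ σ)
    (u v : L) (huv : σ u ⊔ σ v < σ (u ⊔ v)) :
    h ≤ Function.update σ (u ⊔ v) (σ u ⊔ σ v) ∧
      Function.update σ (u ⊔ v) (σ u ⊔ σ v) < σ :=
  gmeet_update_case1_general S h hh σ hσ u v huv
end
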